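/- If X is a k-regular, k-edge-connected multigraph with k ≥ 2, then a generalized truncation Y of X is k-edge-connected if and only if every constituent graph of Y is complete. -/

import Mathlib

/-- A multigraph (possibly with loops and multiple edges): a vertex type,
an edge type, and an incidence map assigning to each edge its unordered pair of ends. -/
structure Multigraph where
  V : Type
  E : Type
  ends : E → Sym2 V

namespace Multigraph

/-- Two vertices are adjacent if some edge joins them. -/
def Adj (X : Multigraph) (u v : X.V) : Prop := ∃ e, X.ends e = s(u, v)

/-- Reachability by walks. -/
def Reachable (X : Multigraph) : X.V → X.V → Prop := Relation.ReflTransGen X.Adj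

/-- A multigraph is connected if every vertex reaches every other. -/
def Connected (X : Multigraph) : Prop := ∀ u v, X.Reachable u v

/-- No loops. -/
def Loopless (X : Multigraph) : Prop := ∀ e, ¬ (X.ends e).IsDiag

/-- Delete a set of edges. -/
def deleteEdges (X : Multigraph) (S : Set X.E) : Multigraph :=
  ⟨X.V, {e // e ∉ S}, fun e => X.ends e.1⟩

/-- A multigraph is a simple graph: no loops and no two parallel edges. -/
def IsSimple (X : Multigraph) : Prop :=
  X.Loopless ∧ ∀ e f, X.ends e = X.ends f → e = f

/-- A perfect matching: a set of non-loop edges such that every vertex is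
incident with exactly one edge of the set. -/
def IsPerfectMatching (X : Multigraph) (M : Set X.E) : Prop :=
  (∀ e ∈ M, ¬ (X.ends e).IsDiag) ∧ ∀ v : X.V, ∃! e, e ∈ M ∧ v ∈ X.ends e

/-- The valency of a vertex (loops would count once here; used for loopless graphs). -/
noncomputable def degree (X : Multigraph) (v : X.V) : ℕ∞ := {e | v ∈ X.ends e}.encard

/-- Data realizing `Y` as a generalized truncation of `X`:
`label` sends each vertex of `Y` to the vertex of `X` whose cluster contains it,
`emb` sends each edge of `X` to the corresponding matching edge of `F(M)` in `Y`;
the matching edges form a perfect matching whose ends are labelled by the ends of the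
original edge, all remaining (constituent) edges lie inside a single cluster, and the
constituents form a simple graph. -/
structure TruncationData (X Y : Multigraph) where
  label : Y.V → X.V
  emb : X.E → Y.E
  emb_inj : Function.Injective emb
  label_surj : Function.Surjective label
  ends_map : ∀ e, (Y.ends (emb e)).map label = X.ends e
  emb_ne : ∀ e, ¬ (Y.ends (emb e)).IsDiag
  matching : ∀ v : Y.V, ∃! e : X.E, v ∈ Y.ends (emb e)
  cluster : ∀ f : Y.E, f ∉ Set.range emb → ((Y.ends f).map label).IsDiag
  simple : (Y.deleteEdges (Set.range emb)).IsSimple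

/-- `Y` is a generalized truncation of `X`. -/
def IsGenTruncation (X Y : Multigraph) : Prop := Nonempty (X.TruncationData Y)

/-- Isomorphism of multigraphs. -/
structure Iso (X Y : Multigraph) where
  vEquiv : X.V ≃ Y.V
  eEquiv : X.E ≃ Y.E
  ends_map : ∀ e, (X.ends e).map vEquiv = Y.ends (eEquiv e)

/-- A truncation is complete if every constituent is a complete graph. -/
def TruncationData.Complete {X Y : Multigraph} (T : TruncationData X Y) : Prop :=
  ∀ x y : Y.V, x ≠ y → T.label x = T.label y →
    ∃ f, f ∉ Set.range T.emb ∧ Y.ends f = s(x, y)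

/-- A truncation is cohesive if every constituent is connected. -/
def TruncationData.Cohesive {X Y : Multigraph} (T : TruncationData X Y) : Prop :=
  ∀ v : X.V, ∀ x y : Y.V, T.label x = v → T.label y = v →
    Relation.ReflTransGen
      (fun a b => T.label a = v ∧ T.label b = v ∧
        ∃ f, f ∉ Set.range T.emb ∧ Y.ends f = s(a, b)) x y

/-- Walks in a multigraph, recording the edges used. -/
inductive Walk (X : Multigraph) : X.V → X.V → Type
  | nil (v : X.V) : Walk X v v
  | cons {u v w : X.V} (e : X.E) (h : X.ends e = s(u, v)) (p : Walk X v w) : Walk X u w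

/-- The list of edges of a walk. -/
def Walk.edges {X : Multigraph} : ∀ {u v : X.V}, X.Walk u v → List X.E
  | _, _, .nil _ => []
  | _, _, .cons e _ p => e :: p.edges

/-- The list of vertices of a walk (in order, with repetitions). -/
def Walk.support {X : Multigraph} : ∀ {u v : X.V}, X.Walk u v → List X.V
  | u, _, .nil _ => [u]
  | u, _, .cons _ _ p => u :: p.support

end Multigraph

namespace Multigraph

/-- A multigraph is `k`-edge-connected if it remains connected after deletion of any
fewer than `k` edges. -/
def EdgeConnectedGE (X : Multigraph) (k : ℕ) : Prop :=
  ∀ S : Set X.E, S.encard < (k : ℕ∞) → (X.deleteEdges S).Connected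

end Multigraph

/-!
Each cluster of `Y` has exactly `k` vertices, one on each edge of `X` at the corresponding
vertex. If two vertices `x ≠ y` of a cluster are not joined, then `x` has at most
`1 + (k - 2)` edges, and deleting them isolates `x`. Conversely, let the constituents be
complete and delete fewer than `k` edges. If every cluster stays connected, paths of `X`
avoiding the deleted matching edges lift to `Y`. Otherwise some cluster splits into nonempty
parts `A`, `B`, and all `|A| |B| ≥ |A| + |B| - 1 = k - 1` edges between them were deleted;
this forces the deleted set to be the `k - 1` constituent edges at a single vertex `x`, which
stays attached through its matching edge, while the rest of `Y` is connected by lifting paths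
of `X` minus one edge.
-/

theorem exists_star_of_cut_subset {α : Type*} {A B : Set α} {P : Set (Sym2 α)}
    (hA : A.Finite) (hB : B.Finite) (hAB : Disjoint A B) (hA₀ : A.Nonempty)
    (hB₀ : B.Nonempty) (hcut : ∀ a ∈ A, ∀ b ∈ B, s(a, b) ∈ P)
    (hP : P.encard < (A ∪ B).encard) :
    ∃ x ∈ A ∪ B, ∀ p ∈ P, ∃ y ∈ A ∪ B, p = s(x, y) := by
  wlog hA₁ : A.encard = 1 generalizing A B
  · have hB₁ : B.encard = 1 := by
      have hcard : (A ×ˢ B).encard ≤ P.encard := by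
        refine Set.encard_le_encard_of_injOn (f := fun q => s(q.1, q.2))
          (fun q hq => hcut _ hq.1 _ hq.2) ?_
        rintro ⟨a, b⟩ ⟨ha, hb⟩ ⟨a', b'⟩ ⟨ha', hb'⟩ h
        rcases Sym2.eq_iff.1 h with ⟨rfl, rfl⟩ | ⟨rfl, rfl⟩
        · rfl
        · exact absurd hb' (hAB.notMem_of_mem_left ha)
      have hlt := hcard.trans_lt hP
      rw [Set.encard_prod, Set.encard_union_eq hAB, ← hA.cast_ncard_eq,
        ← hB.cast_ncard_eq] at hlt
      rw [← hA.cast_ncard_eq] at hA₁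
      rw [← hB.cast_ncard_eq]
      have ha := (Set.ncard_pos hA).2 hA₀
      have hb := (Set.ncard_pos hB).2 hB₀
      norm_cast at hlt hA₁ ⊢
      have ha₂ : 2 ≤ A.ncard := by omega
      by_contra hb₁
      have hb₂ : 2 ≤ B.ncard := by omega
      nlinarith
    rw [Set.union_comm] at hP ⊢
    exact this hB hA hAB.symm hB₀ hA₀ (fun b hb a ha => Sym2.eq_swap ▸ hcut a ha b hb) hP hB₁
  obtain ⟨x, rfl⟩ := Set.encard_eq_one.1 hA₁
  have hQ : (fun b => s(x, b)) '' B = P := by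
    have hinj : Set.InjOn (fun b => s(x, b)) B := fun b _ b' _ h => Sym2.congr_right.1 h
    refine Set.Finite.eq_of_subset_of_encard_le' (Set.encard_lt_top_iff.1 (hP.trans_le le_top))
      (by rintro _ ⟨b, hb, rfl⟩; exact hcut x rfl b hb) ?_
    rwa [hinj.encard_image, ← ENat.lt_add_one_iff hB.encard_lt_top.ne, add_comm,
      ← hA₁, ← Set.encard_union_eq hAB]
  refine ⟨x, Or.inl rfl, fun p hp => ?_⟩
  obtain ⟨b, hb, rfl⟩ := hQ ▸ hp
  exact ⟨b, Or.inr hb, rfl⟩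

namespace Multigraph

variable {X Y : Multigraph}

theorem Adj.symm {u v : X.V} (h : X.Adj u v) : X.Adj v u :=
  let ⟨e, he⟩ := h
  ⟨e, he.trans Sym2.eq_swap⟩

theorem Reachable.symm {u v : X.V} (h : X.Reachable u v) : X.Reachable v u := by
  induction h with
  | refl => exact .refl
  | tail _ hadj ih => exact .head hadj.symm ih

theorem adj_deleteEdges {S : Set X.E} {e : X.E} (he : e ∉ S) {u v : X.V}
    (h : X.ends e = s(u, v)) : (X.deleteEdges S).Adj u v :=
  ⟨⟨e, he⟩, h⟩

theorem connected_of_adj_of_reachable {x q : X.V} (hxq : X.Adj x q) (hqx : q ≠ x)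
    (h : ∀ a b, a ≠ x → b ≠ x → X.Reachable a b) : X.Connected := by
  have hx : ∀ b, X.Reachable x b := fun b => by
    rcases eq_or_ne b x with rfl | hbx
    · exact .refl
    · exact .head hxq (h q b hqx hbx)
  intro a b
  rcases eq_or_ne a x with rfl | hax
  · exact hx b
  · exact (hx a).symm.trans (hx b)

theorem not_reachable_deleteEdges_incident {x y : X.V} (hxy : x ≠ y) :
    ¬ (X.deleteEdges {e | x ∈ X.ends e}).Reachable x y := by
  intro h
  rcases h.cases_head with h | ⟨c, ⟨e, he⟩, -⟩
  · exact hxy h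
  · have he : X.ends e.1 = s(x, c) := he
    exact e.2 (show x ∈ X.ends e.1 from he ▸ Sym2.mem_mk_left x c)

theorem encard_le_of_forall_ends_eq {F : Set X.E} {D : Set X.V} {x : X.V}
    (hF : Set.InjOn X.ends F) (hD : ∀ e ∈ F, ∃ z ∈ D, X.ends e = s(x, z)) :
    F.encard ≤ D.encard :=
  calc F.encard = (X.ends '' F).encard := hF.encard_image.symm
    _ ≤ ((fun z => s(x, z)) '' D).encard := Set.encard_le_encard <| by
      rintro _ ⟨e, he, rfl⟩
      obtain ⟨z, hz, h⟩ := hD e he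
      exact ⟨z, hz, h.symm⟩
    _ ≤ D.encard := Set.encard_image_le _ _

namespace TruncationData

variable (T : TruncationData X Y)

noncomputable def matchingEdge (y : Y.V) : X.E := (T.matching y).exists.choose

theorem mem_ends_emb_matchingEdge (y : Y.V) : y ∈ Y.ends (T.emb (T.matchingEdge y)) :=
  (T.matching y).exists.choose_spec

theorem matchingEdge_eq {y : Y.V} {e : X.E} (h : y ∈ Y.ends (T.emb e)) :
    T.matchingEdge y = e :=
  (T.matching y).unique (T.mem_ends_emb_matchingEdge y) h

variable {T}

theorem injOn_ends_constituent : Set.InjOn Y.ends (Set.range T.emb)ᶜ :=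
  fun f hf g hg h => congrArg Subtype.val (T.simple.2 ⟨f, hf⟩ ⟨g, hg⟩ h)

theorem ne_of_constituent {f : Y.E} (hf : f ∉ Set.range T.emb) {a b : Y.V}
    (h : Y.ends f = s(a, b)) : a ≠ b := by
  rintro rfl
  exact T.simple.1 ⟨f, hf⟩ (by simp [deleteEdges, h])

theorem label_eq_of_constituent {f : Y.E} (hf : f ∉ Set.range T.emb) {a b : Y.V}
    (h : Y.ends f = s(a, b)) : T.label a = T.label b := by
  simpa [h] using T.cluster f hf

theorem label_ne_of_ends_emb (hX : X.Loopless) {e : X.E} {a b : Y.V}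
    (h : Y.ends (T.emb e) = s(a, b)) : T.label a ≠ T.label b := by
  intro hab
  apply hX e
  rw [← T.ends_map e, h, Sym2.map_mk, hab]
  exact Sym2.mk_isDiag_iff.2 rfl

theorem exists_ends_emb_eq {e : X.E} {u w : X.V} (h : X.ends e = s(u, w)) :
    ∃ p q, T.label p = u ∧ T.label q = w ∧ Y.ends (T.emb e) = s(p, q) := by
  induction hpq : Y.ends (T.emb e) using Sym2.ind with
  | _ p q =>
    have hmap : s(T.label p, T.label q) = s(u, w) := by
      rw [← Sym2.map_mk, ← hpq, T.ends_map, h]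
    rcases Sym2.eq_iff.1 hmap with ⟨hp, hq⟩ | ⟨hp, hq⟩
    · exact ⟨p, q, hp, hq, rfl⟩
    · exact ⟨q, p, hq, hp, Sym2.eq_swap⟩

theorem encard_label_eq (hX : X.Loopless) (v : X.V) :
    {y | T.label y = v}.encard = X.degree v := by
  have himage : T.matchingEdge '' {y | T.label y = v} = {e | v ∈ X.ends e} := by
    ext e
    constructor
    · rintro ⟨y, rfl, rfl⟩
      show T.label y ∈ X.ends _
      rw [← T.ends_map]
      exact Sym2.mem_map.2 ⟨y, T.mem_ends_emb_matchingEdge y, rfl⟩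
    · intro he
      change v ∈ X.ends e at he
      rw [← T.ends_map e] at he
      obtain ⟨y, hy, rfl⟩ := Sym2.mem_map.1 he
      exact ⟨y, rfl, T.matchingEdge_eq hy⟩
  have hinj : Set.InjOn T.matchingEdge {y | T.label y = v} := by
    intro y hy y' hy' h
    by_contra hne
    have hends := (Sym2.mem_and_mem_iff hne).1
      ⟨T.mem_ends_emb_matchingEdge y, h ▸ T.mem_ends_emb_matchingEdge y'⟩
    exact label_ne_of_ends_emb hX hends (hy.trans hy'.symm)
  rw [degree, ← himage, hinj.encard_image]

theorem reachable_deleteEdges_of_reachable {S : Set Y.E} {EX : Set X.E} (P : Y.V → Prop)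
    (hS : ∀ e ∉ EX, T.emb e ∉ S) (hP : ∀ e ∉ EX, ∀ p ∈ Y.ends (T.emb e), P p)
    (hcluster : ∀ a b, P a → P b → T.label a = T.label b → (Y.deleteEdges S).Reachable a b)
    {u w : X.V} (h : (X.deleteEdges EX).Reachable u w) {a b : Y.V} (ha : P a) (hb : P b)
    (hau : T.label a = u) (hbw : T.label b = w) : (Y.deleteEdges S).Reachable a b := by
  induction h using Relation.ReflTransGen.head_induction_on generalizing a with
  | refl => exact hcluster a b ha hb (hau.trans hbw.symm)
  | head hadj _ ih =>
    obtain ⟨⟨e, he⟩, hends⟩ := hadj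
    obtain ⟨p, q, hp, hq, hpq⟩ := T.exists_ends_emb_eq hends
    have hPp := hP e he p (hpq ▸ Sym2.mem_mk_left p q)
    have hPq := hP e he q (hpq ▸ Sym2.mem_mk_right p q)
    exact (hcluster a p ha hPp (hau.trans hp.symm)).trans
      (.head (adj_deleteEdges (hS e he) hpq) (ih hPq hq))

theorem complete_of_edgeConnected (hX : X.Loopless) {k : ℕ}
    (hreg : ∀ v : X.V, X.degree v = (k : ℕ∞)) (hY : Y.EdgeConnectedGE k) : T.Complete := by
  intro x y hxy hlab
  by_contra hno
  push Not at hno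
  set C : Set Y.V := {z | T.label z = T.label x}
  set D : Set Y.V := (C \ {x}) \ {y}
  have hDk : D.encard + 1 + 1 = k := by
    rw [Set.encard_sdiff_singleton_add_one (show y ∈ C \ {x} from ⟨hlab.symm, hxy.symm⟩),
      Set.encard_sdiff_singleton_add_one (show x ∈ C from rfl), T.encard_label_eq hX, hreg]
  have hconst : {g | x ∈ Y.ends g ∧ g ∉ Set.range T.emb}.encard ≤ D.encard := by
    refine encard_le_of_forall_ends_eq (x := x) (injOn_ends_constituent.mono fun g hg => hg.2) ?_
    rintro g ⟨hxg, hg⟩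
    obtain ⟨z, hz⟩ := Sym2.mem_iff_exists.1 hxg
    exact ⟨z, ⟨⟨(label_eq_of_constituent hg hz).symm, (ne_of_constituent hg hz).symm⟩,
      fun hzy => hno g hg (hzy ▸ hz)⟩, hz⟩
  have hincident : {g | x ∈ Y.ends g} ⊆
      insert (T.emb (T.matchingEdge x)) {g | x ∈ Y.ends g ∧ g ∉ Set.range T.emb} := by
    rintro g hg
    by_cases hr : g ∈ Set.range T.emb
    · obtain ⟨e, rfl⟩ := hr
      exact Or.inl (by rw [T.matchingEdge_eq hg])
    · exact Or.inr ⟨hg, hr⟩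
  have hDtop : D.encard ≠ ⊤ := fun h => by simp [h] at hDk
  refine not_reachable_deleteEdges_incident hxy (hY _ ?_ x y)
  calc {g | x ∈ Y.ends g}.encard
      ≤ {g | x ∈ Y.ends g ∧ g ∉ Set.range T.emb}.encard + 1 :=
        (Set.encard_le_encard hincident).trans (Set.encard_insert_le _ _)
    _ ≤ D.encard + 1 := by gcongr
    _ < k := by
      rw [← hDk]
      exact ENat.lt_add_one_iff (by simpa using hDtop) |>.2 le_rfl

theorem connected_deleteEdges_of_reachable_label_eq {k : ℕ} (hXk : X.EdgeConnectedGE k)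
    {S : Set Y.E} (hS : S.encard < k)
    (h : ∀ a b, T.label a = T.label b → (Y.deleteEdges S).Reachable a b) :
    (Y.deleteEdges S).Connected := by
  have hpre : (T.emb ⁻¹' S).encard < k :=
    calc (T.emb ⁻¹' S).encard = (T.emb '' (T.emb ⁻¹' S)).encard :=
          (T.emb_inj.injOn.encard_image).symm
      _ ≤ S.encard := Set.encard_le_encard (Set.image_preimage_subset _ _)
      _ < k := hS
  intro a b
  exact T.reachable_deleteEdges_of_reachable (fun _ => True) (fun _ he => he)
    (fun _ _ _ _ => trivial) (fun a b _ _ => h a b) (hXk _ hpre _ _) trivial trivial rfl rfl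

theorem exists_forall_mem_ends_of_not_reachable (hX : X.Loopless) {k : ℕ}
    (hreg : ∀ v : X.V, X.degree v = (k : ℕ∞)) (hC : T.Complete) {S : Set Y.E}
    (hS : S.encard < k) {a₀ b₀ : Y.V} (hlab : T.label a₀ = T.label b₀)
    (hnr : ¬ (Y.deleteEdges S).Reachable a₀ b₀) :
    ∃ x, ∀ g ∈ S, g ∉ Set.range T.emb ∧ x ∈ Y.ends g := by
  set C : Set Y.V := {z | T.label z = T.label a₀}
  set A : Set Y.V := {a ∈ C | (Y.deleteEdges S).Reachable a₀ a}
  have hCk : C.encard = k := (T.encard_label_eq hX _).trans (hreg _)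
  have hCfin : C.Finite := Set.finite_of_encard_eq_coe hCk
  have hAC : A ∪ C \ A = C := Set.union_sdiff_cancel (Set.sep_subset _ _)
  have hcut : ∀ a ∈ A, ∀ b ∈ C \ A, s(a, b) ∈ Y.ends '' S := by
    rintro a ⟨haC, ha⟩ b ⟨hbC, hbA⟩
    obtain ⟨f, hf, hends⟩ := hC a b (fun hab => hbA (hab ▸ ⟨haC, ha⟩)) (haC.trans hbC.symm)
    refine ⟨f, ?_, hends⟩
    by_contra hfS
    exact hbA ⟨hbC, ha.tail (adj_deleteEdges hfS hends)⟩
  have hP : (Y.ends '' S).encard < (A ∪ C \ A).encard := by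
    rw [hAC, hCk]
    exact (Set.encard_image_le _ _).trans_lt hS
  obtain ⟨x, hx, hstar⟩ := exists_star_of_cut_subset (hCfin.subset (Set.sep_subset _ _))
    (hCfin.subset Set.sdiff_subset) Set.disjoint_sdiff_right ⟨a₀, rfl, .refl⟩
    (show (C \ A).Nonempty from ⟨b₀, hlab.symm, fun hb => hnr hb.2⟩) hcut hP
  rw [hAC] at hx hstar
  refine ⟨x, fun g hg => ?_⟩
  obtain ⟨y, hy, hends⟩ := hstar _ ⟨g, hg, rfl⟩
  refine ⟨?_, hends ▸ Sym2.mem_mk_left x y⟩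
  rintro ⟨e, rfl⟩
  exact label_ne_of_ends_emb hX hends (hx.trans hy.symm)

theorem connected_deleteEdges_of_forall_mem_ends {k : ℕ} (hk : 2 ≤ k) (hXk : X.EdgeConnectedGE k)
    (hC : T.Complete) {S : Set Y.E} {x : Y.V}
    (hSx : ∀ g ∈ S, g ∉ Set.range T.emb ∧ x ∈ Y.ends g) : (Y.deleteEdges S).Connected := by
  have hembS : ∀ e, T.emb e ∉ S := fun e he => (hSx _ he).1 ⟨e, rfl⟩
  obtain ⟨q, hq⟩ := Sym2.mem_iff_exists.1 (T.mem_ends_emb_matchingEdge x)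
  have hqx : q ≠ x := fun h => T.emb_ne _ (by rw [hq, h]; exact Sym2.mk_isDiag_iff.2 rfl)
  have hone : ({T.matchingEdge x} : Set X.E).encard < k := by
    rw [Set.encard_singleton]
    exact_mod_cast hk
  have hcluster : ∀ a b, a ≠ x → b ≠ x → T.label a = T.label b →
      (Y.deleteEdges S).Reachable a b := by
    intro a b hax hbx hab
    rcases eq_or_ne a b with rfl | hne
    · exact .refl
    obtain ⟨f, hf, hends⟩ := hC a b hne hab
    refine .single (adj_deleteEdges (fun hfS => ?_) hends)
    rcases Sym2.mem_iff.1 (hends ▸ (hSx f hfS).2) with h | h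
    exacts [hax h.symm, hbx h.symm]
  refine connected_of_adj_of_reachable (adj_deleteEdges (hembS _) hq) hqx fun a b ha hb => ?_
  refine T.reachable_deleteEdges_of_reachable (· ≠ x) (fun e _ => hembS e) ?_ hcluster
    (hXk _ hone _ _) ha hb rfl rfl
  rintro e he p hp rfl
  exact he (T.matchingEdge_eq hp).symm

theorem edgeConnected_of_complete (hX : X.Loopless) {k : ℕ} (hk : 2 ≤ k)
    (hreg : ∀ v : X.V, X.degree v = (k : ℕ∞)) (hXk : X.EdgeConnectedGE k) (hC : T.Complete) :
    Y.EdgeConnectedGE k := by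
  intro S hS
  by_cases h : ∀ a b, T.label a = T.label b → (Y.deleteEdges S).Reachable a b
  · exact connected_deleteEdges_of_reachable_label_eq hXk hS h
  · push Not at h
    obtain ⟨a₀, b₀, hlab, hnr⟩ := h
    obtain ⟨x, hx⟩ := exists_forall_mem_ends_of_not_reachable hX hreg hC hS hlab hnr
    exact connected_deleteEdges_of_forall_mem_ends hk hXk hC hx

end TruncationData

end Multigraph

open Multigraph in
/-- If `X` is a `k`-regular, `k`-edge-connected multigraph with `k ≥ 2`,
then a generalized truncation `Y` of `X` is `k`-edge-connected if and only if every
constituent graph of `Y` is complete. -/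
theorem truncation_edgeConnected_iff_complete (X Y : Multigraph) (hX : X.Loopless)
    (k : ℕ) (hk : 2 ≤ k) (hreg : ∀ v : X.V, X.degree v = (k : ℕ∞))
    (hXk : X.EdgeConnectedGE k) (T : TruncationData X Y) :
    Y.EdgeConnectedGE k ↔ T.Complete :=
  ⟨T.complete_of_edgeConnected hX hreg, T.edgeConnected_of_complete hX hk hreg hXk⟩
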